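/- For every v ∈ {1,…,V}, the map b ↦ μ(b,v) is non-decreasing on {1,…,B}: if 1 ≤ b ≤ b' ≤ B then μ(b,v) ≤ μ(b',v). -/

import Mathlib

/-- `delta S hS c h r b v` is δ(b,v): δ(b,0) = 0 and
δ(b,v) = h(b) + min_{s ∈ S} (c(s) − s·(r(v) + Σ_{i=0}^{v−1} δ(b,i))). -/
noncomputable def delta (S : Finset ℝ) (hS : S.Nonempty) (c : ℝ → ℝ) (h r : ℕ → ℝ)
    (b : ℕ) : ℕ → ℝ
  | 0 => 0
  | v + 1 => h b + S.inf' hS (fun s =>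
      c s - s * (r (v + 1) + ∑ i ∈ (Finset.range (v + 1)).attach, delta S hS c h r b i.1))
decreasing_by exact Finset.mem_range.mp i.2

/-- `sigma S hS c h r b v` is σ(b,v) = Σ_{i=0}^{v} δ(b,i). -/
noncomputable def sigma (S : Finset ℝ) (hS : S.Nonempty) (c : ℝ → ℝ) (h r : ℕ → ℝ)
    (b v : ℕ) : ℝ :=
  ∑ i ∈ Finset.range (v + 1), delta S hS c h r b i

open Classical

/-- `gmin S hS c x` = the least element of the set of minimizers over s ∈ S of c(s) − s·x. -/
noncomputable def gmin (S : Finset ℝ) (hS : S.Nonempty) (c : ℝ → ℝ) (x : ℝ) : ℝ :=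
  (S.filter (fun s => ∀ s' ∈ S, c s - s * x ≤ c s' - s' * x)).min'
    (by
      obtain ⟨s, hs, hmin⟩ := S.exists_min_image (fun s => c s - s * x) hS
      exact ⟨s, Finset.mem_filter.mpr ⟨hs, fun s' hs' => hmin s' hs'⟩⟩)

/-- μ(b,v) = g(r(v) + σ(b,v−1)). -/
noncomputable def mu (S : Finset ℝ) (hS : S.Nonempty) (c : ℝ → ℝ) (h r : ℕ → ℝ)
    (b v : ℕ) : ℝ :=
  gmin S hS c (r v + sigma S hS c h r b (v - 1))

/-!
Each minimiser of `s ↦ c s - s * x` is nondecreasing in `x` (exchange argument), so it suffices that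
`σ(b, v)` is nondecreasing in `b`. This follows by induction on `v` from
`σ(b, v + 1) = h b + min_s (σ(b, v) (1 - s) + c s - s r(v + 1))`, which is nondecreasing in both
`h b` and `σ(b, v)` because every `s ∈ S` is at most `1`.
-/

section Recursion

variable (S : Finset ℝ) (hS : S.Nonempty) (c : ℝ → ℝ) (h r : ℕ → ℝ)

lemma delta_succ (b v : ℕ) :
    delta S hS c h r b (v + 1)
      = h b + S.inf' hS (fun s => c s - s * (r (v + 1) + sigma S hS c h r b v)) := by
  rw [delta, sigma, ← Finset.sum_attach (Finset.range (v + 1))]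

lemma sigma_succ (b v : ℕ) :
    sigma S hS c h r b (v + 1) = sigma S hS c h r b v + delta S hS c h r b (v + 1) :=
  Finset.sum_range_succ _ _

end Recursion

lemma monotone_add_inf'_sub_mul {S : Finset ℝ} (hS : S.Nonempty) (hS1 : ∀ s ∈ S, s ≤ 1)
    (c : ℝ → ℝ) (a : ℝ) :
    Monotone (fun y => y + S.inf' hS (fun s => c s - s * (a + y))) := by
  intro y y' hyy'
  simp only [← sub_le_iff_le_add']
  refine Finset.le_inf' _ _ fun s hs => ?_
  have hinf := Finset.inf'_le (fun s => c s - s * (a + y)) hs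
  nlinarith [hS1 s hs]

lemma sigma_mono_left {S : Finset ℝ} (hS : S.Nonempty) (hS1 : ∀ s ∈ S, s ≤ 1) (c : ℝ → ℝ)
    {h : ℕ → ℝ} (hh : Monotone h) (r : ℕ → ℝ) (v : ℕ) :
    Monotone (fun b => sigma S hS c h r b v) := by
  intro b b' hbb'
  induction v with
  | zero => simp [sigma, delta]
  | succ v ih =>
    have hstep := monotone_add_inf'_sub_mul hS hS1 c (r (v + 1)) ih
    simp only [sigma_succ, delta_succ] at hstep ⊢
    linarith [hh hbb']

lemma gmin_mem_and_le (S : Finset ℝ) (hS : S.Nonempty) (c : ℝ → ℝ) (x : ℝ) :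
    gmin S hS c x ∈ S ∧ ∀ s ∈ S, c (gmin S hS c x) - gmin S hS c x * x ≤ c s - s * x :=
  Finset.mem_filter.mp (Finset.min'_mem _ _)

lemma gmin_mono (S : Finset ℝ) (hS : S.Nonempty) (c : ℝ → ℝ) : Monotone (gmin S hS c) := by
  intro x x' hxx'
  rcases hxx'.eq_or_lt with rfl | hlt
  · rfl
  obtain ⟨hm, hm_le⟩ := gmin_mem_and_le S hS c x
  obtain ⟨hm', hm'_le⟩ := gmin_mem_and_le S hS c x'
  have hexchange : 0 ≤ (gmin S hS c x' - gmin S hS c x) * (x' - x) := by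
    linarith [hm_le _ hm', hm'_le _ hm]
  exact sub_nonneg.mp (nonneg_of_mul_nonneg_left hexchange (sub_pos.mpr hlt))

theorem stmt8_general
    (S : Finset ℝ) (hS : S.Nonempty) (hS01 : ∀ s ∈ S, s ∈ Set.Icc (0 : ℝ) 1)
    (c : ℝ → ℝ)
    (h : ℕ → ℝ) (hhmono : Monotone h)
    (r : ℕ → ℝ)
    (B V : ℕ)
    :
    ∀ v, 1 ≤ v → v ≤ V → ∀ b b', 1 ≤ b → b ≤ b' → b' ≤ B →
      mu S hS c h r b v ≤ mu S hS c h r b' v := by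
  intro v _ _ b b' _ hbb' _
  have hS1 : ∀ s ∈ S, s ≤ 1 := fun s hs => (hS01 s hs).2
  exact gmin_mono S hS c
    (add_le_add_right (sigma_mono_left hS hS1 c hhmono r (v - 1) hbb') (r v))

/-- For each v ∈ {1,…,V}, b ↦ μ(b,v) is non-decreasing on {1,…,B}. -/
theorem stmt8
    (S : Finset ℝ) (hS : S.Nonempty) (hS01 : ∀ s ∈ S, s ∈ Set.Icc (0 : ℝ) 1)
    (c : ℝ → ℝ) (hc0 : ∀ s ∈ S, 0 ≤ c s)
    (hcmono : ∀ s ∈ S, ∀ s' ∈ S, s ≤ s' → c s ≤ c s')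
    (h : ℕ → ℝ) (hh0 : ∀ b, 0 ≤ h b) (hhmono : Monotone h)
    (r : ℕ → ℝ) (hrmono : Monotone r) (hr0 : r 0 = 0) (hrpos : ∀ v, 1 ≤ v → 0 < r v)
    (B V : ℕ) (hB : 0 < B) (hV : 0 < V)
    :
    ∀ v, 1 ≤ v → v ≤ V → ∀ b b', 1 ≤ b → b ≤ b' → b' ≤ B →
      mu S hS c h r b v ≤ mu S hS c h r b' v :=
  stmt8_general S hS hS01 c h hhmono r B V
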